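/- arXiv:1910.03978 — 3 statements merged into one kernel-verified Lean document; each statement's English description precedes it below -/
import Mathlib

section
/- Let G = diag(λ_1, λ_2, λ_3) with distinct positive entries λ_1, λ_2, λ_3, and let Φ(Q) = tr(G(I − Q)) for Q ∈ SO(3). Then Q ∈ SO(3) is a critical point of Φ (i.e., tr(G Q η^∧) = 0 for all η ∈ R^3) if and only if Q ∈ {I, D_1, D_2, D_3}, where D_i = 2 e_i e_i^T − I and e_i is the i-th standard basis vector. -/
/-!
`tr(A η^∧)` is a linear combination of the antisymmetric parts of the entries of `A`, so `Q` is
critical exactly when `G Q` is symmetric. Orthogonality then gives both `G Q = Qᵀ G` and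
`Q G = G Qᵀ`, whence `(λᵢ² - λⱼ²) Qᵢⱼ = 0`: `Q` is diagonal, hence a diagonal sign matrix of
determinant one.
-/

open Matrix

def hat (x : Fin 3 → ℝ) : Matrix (Fin 3) (Fin 3) ℝ :=
  !![0, -x 2, x 1; x 2, 0, -x 0; -x 1, x 0, 0]

/-- `D_i = 2 e_i e_iᵀ − I`. -/
def Dmat (i : Fin 3) : Matrix (Fin 3) (Fin 3) ℝ :=
  (2 : ℝ) • vecMulVec (Pi.single i 1) (Pi.single i 1) - 1

theorem trace_mul_hat (A : Matrix (Fin 3) (Fin 3) ℝ) (η : Fin 3 → ℝ) :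
    (A * hat η).trace =
      η 0 * (A 1 2 - A 2 1) + η 1 * (A 2 0 - A 0 2) + η 2 * (A 0 1 - A 1 0) := by
  simp only [trace, hat, diag_apply, mul_apply, of_apply, cons_val', cons_val_fin_one,
    Fin.sum_univ_three, cons_val_zero, cons_val_one, cons_val, mul_zero, zero_add, mul_neg, add_zero]
  ring

theorem forall_trace_mul_hat_eq_zero_iff (A : Matrix (Fin 3) (Fin 3) ℝ) :
    (∀ η, (A * hat η).trace = 0) ↔ A.IsSymm := by
  simp only [trace_mul_hat]
  constructor
  · intro h
    have h₀ := h ![1, 0, 0]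
    have h₁ := h ![0, 1, 0]
    have h₂ := h ![0, 0, 1]
    simp only [cons_val_zero, cons_val_one, cons_val_two, Nat.succ_eq_add_one, Nat.reduceAdd,
      tail_cons, head_cons, one_mul, zero_mul, add_zero, zero_add] at h₀ h₁ h₂
    refine IsSymm.ext fun i j => ?_
    fin_cases i <;> fin_cases j <;> dsimp <;> linarith
  · intro hA η
    simp only [← hA.apply 1 2, ← hA.apply 2 0, ← hA.apply 0 1, sub_self, mul_zero, add_zero]

theorem Matrix.mul_eq_mul_transpose_of_transpose_mul_eq {R n : Type*} [CommRing R] [Fintype n]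
    [DecidableEq n] {Q D : Matrix n n R} (hQ : Qᵀ * Q = 1) (h : Qᵀ * D = D * Q) :
    Q * D = D * Qᵀ := by
  have hQ' : Q * Qᵀ = 1 := mul_eq_one_comm.mp hQ
  calc Q * D = Q * D * (Q * Qᵀ) := by rw [hQ', mul_one]
    _ = Q * (D * Q) * Qᵀ := by simp only [Matrix.mul_assoc]
    _ = Q * Qᵀ * D * Qᵀ := by rw [← h]; simp only [Matrix.mul_assoc]
    _ = D * Qᵀ := by rw [hQ', Matrix.one_mul]

theorem Matrix.isDiag_of_isSymm_diagonal_mul {n : Type*} [Fintype n] [DecidableEq n]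
    {l : n → ℝ} (hpos : ∀ i, 0 < l i) (hl : Function.Injective l) {Q : Matrix n n ℝ}
    (hQ : Qᵀ * Q = 1) (hsymm : (diagonal l * Q).IsSymm) : Q.IsDiag := by
  have hleft : Qᵀ * diagonal l = diagonal l * Q := by
    simpa only [IsSymm, transpose_mul, diagonal_transpose] using hsymm
  have hright := mul_eq_mul_transpose_of_transpose_mul_eq hQ hleft
  intro i j hij
  have h₁ : Q j i * l j = l i * Q i j := by
    simpa only [mul_diagonal, diagonal_mul, transpose_apply] using congr_fun₂ hleft i j
  have h₂ : Q i j * l j = l i * Q j i := by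
    simpa only [mul_diagonal, diagonal_mul, transpose_apply] using congr_fun₂ hright i j
  have hsq : (l i - l j) * (l i + l j) * Q i j = 0 := by linear_combination -l i * h₁ - l j * h₂
  have hsub : l i - l j ≠ 0 := sub_ne_zero.mpr (hl.ne hij)
  have hadd : l i + l j ≠ 0 := (add_pos (hpos i) (hpos j)).ne'
  simpa [hsub, hadd] using hsq

theorem Dmat_eq_diagonal (i : Fin 3) : Dmat i = diagonal fun j => if j = i then 1 else -1 := by
  ext a b
  by_cases hab : a = b
  · subst hab
    by_cases ha : a = i
    · subst ha; norm_num [Dmat, vecMulVec_apply]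
    · simp [Dmat, ha, vecMulVec_apply]
  · simp [Dmat, hab, vecMulVec_apply, Pi.single_apply]
    grind

theorem eq_one_or_exists_eq_ite_of_prod_eq_one {d : Fin 3 → ℝ} (hd : ∀ i, d i = 1 ∨ d i = -1)
    (hprod : d 0 * d 1 * d 2 = 1) :
    d = 1 ∨ ∃ i, d = fun j => if j = i then 1 else -1 := by
  obtain h₀ | h₀ := hd 0 <;> obtain h₁ | h₁ := hd 1 <;> obtain h₂ | h₂ := hd 2 <;>
    rw [h₀, h₁, h₂] at hprod <;> norm_num at hprod
  · exact Or.inl (funext fun j => by fin_cases j <;> simp [*])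
  · exact Or.inr ⟨0, funext fun j => by fin_cases j <;> simp [*]⟩
  · exact Or.inr ⟨1, funext fun j => by fin_cases j <;> simp [*]⟩
  · exact Or.inr ⟨2, funext fun j => by fin_cases j <;> simp [*]⟩

theorem eq_one_or_eq_Dmat_of_isDiag {Q : Matrix (Fin 3) (Fin 3) ℝ} (hdiag : Q.IsDiag)
    (hQ : Qᵀ * Q = 1) (hdet : Q.det = 1) :
    Q = 1 ∨ Q = Dmat 0 ∨ Q = Dmat 1 ∨ Q = Dmat 2 := by
  obtain ⟨d, rfl⟩ : ∃ d, Q = diagonal d := ⟨Q.diag, hdiag.diagonal_diag.symm⟩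
  have hsq : ∀ i, d i * d i = 1 := by
    rw [diagonal_transpose, diagonal_mul_diagonal, ← diagonal_one] at hQ
    exact congr_fun (diagonal_injective hQ)
  rw [det_diagonal, Fin.prod_univ_three] at hdet
  rcases eq_one_or_exists_eq_ite_of_prod_eq_one (fun i => mul_self_eq_one_iff.mp (hsq i)) hdet with rfl | ⟨i, rfl⟩
  · exact Or.inl diagonal_one
  · fin_cases i <;> simp [Dmat_eq_diagonal]

theorem critical_points_trace_form (l : Fin 3 → ℝ) (hpos : ∀ i, 0 < l i)
    (hdist : Function.Injective l)
    (Q : Matrix (Fin 3) (Fin 3) ℝ) (hQ : Qᵀ * Q = 1) (hdet : Q.det = 1) :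
    (∀ η : Fin 3 → ℝ, (Matrix.diagonal l * Q * hat η).trace = 0) ↔
      Q = 1 ∨ Q = Dmat 0 ∨ Q = Dmat 1 ∨ Q = Dmat 2 := by
  rw [forall_trace_mul_hat_eq_zero_iff]
  constructor
  · intro hsymm
    exact eq_one_or_eq_Dmat_of_isDiag (isDiag_of_isSymm_diagonal_mul hpos hdist hQ hsymm) hQ hdet
  · intro hmem
    obtain ⟨s, rfl⟩ : ∃ s, Q = diagonal s := by
      rcases hmem with rfl | rfl | rfl | rfl
      · exact ⟨1, diagonal_one.symm⟩
      all_goals exact ⟨_, Dmat_eq_diagonal _⟩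
    rw [diagonal_mul_diagonal]
    exact (isDiag_diagonal _).isSymm
end

section
/- Let R, R̂ ∈ SO(3), let b_1, ..., b_m be unit vectors in R^3 with positive weights k_1, ..., k_m, and define K = Σ_j k_j b_j b_j^T, Q̃ = R̂ R^T, and e = Σ_j k_j (R̂^T b_j) × (R^T b_j). Then e^∧ = R^T (K Q̃ − Q̃^T K) R. -/
/-!
Since `hat (u × v) = v uᵀ - u vᵀ`, the `j`-th summand of `e^∧` is
`k j • (Rᵀ b bᵀ R̂ - R̂ᵀ b bᵀ R)`, and by linearity of `hat`
the whole of `e^∧` is `Rᵀ K R̂ - R̂ᵀ K R`.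
Conjugating `K Q̃ - Q̃ᵀ K` by `R` gives the same matrix, because `Rᵀ R = 1`.
-/

open Matrix

def hatLinearMap : (Fin 3 → ℝ) →ₗ[ℝ] Matrix (Fin 3) (Fin 3) ℝ where
  toFun := hat
  map_add' x y := by ext i j; fin_cases i <;> fin_cases j <;> simp [hat] <;> ring
  map_smul' c x := by ext i j; fin_cases i <;> fin_cases j <;> simp [hat]

theorem hat_sum {ι : Type*} (s : Finset ι) (f : ι → Fin 3 → ℝ) :
    hat (∑ i ∈ s, f i) = ∑ i ∈ s, hat (f i) :=
  map_sum hatLinearMap f s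

theorem hat_smul (c : ℝ) (x : Fin 3 → ℝ) : hat (c • x) = c • hat x :=
  map_smul hatLinearMap c x

theorem hat_crossProduct (u v : Fin 3 → ℝ) :
    hat (crossProduct u v) = vecMulVec v u - vecMulVec u v := by
  ext i j; fin_cases i <;> fin_cases j <;> simp [hat, cross_apply, vecMulVec_apply] <;> ring

theorem hat_crossProduct_mulVec_transpose (A B : Matrix (Fin 3) (Fin 3) ℝ) (x y : Fin 3 → ℝ) :
    hat (crossProduct (Aᵀ *ᵥ x) (Bᵀ *ᵥ y)) =
      Bᵀ * vecMulVec y x * A - Aᵀ * vecMulVec x y * B := by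
  rw [hat_crossProduct, mul_vecMulVec, mul_vecMulVec, vecMulVec_mul, vecMulVec_mul,
    mulVec_transpose, mulVec_transpose]

theorem transpose_mul_commutator_mul_eq {n : Type*} [Fintype n] [DecidableEq n]
    {α : Type*} [CommRing α] {R : Matrix n n α} (hR : Rᵀ * R = 1) (K S : Matrix n n α) :
    Rᵀ * (K * (S * Rᵀ) - (S * Rᵀ)ᵀ * K) * R = Rᵀ * K * S - Sᵀ * K * R := by
  rw [transpose_mul, transpose_transpose, mul_sub, sub_mul]
  simp only [← Matrix.mul_assoc, hR, Matrix.one_mul]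
  simp only [Matrix.mul_assoc, hR, Matrix.mul_one]

theorem hat_error_vector_general (m : ℕ) (R Rh : Matrix (Fin 3) (Fin 3) ℝ)
    (hR : Rᵀ * R = 1)
    (b : Fin m → (Fin 3 → ℝ)) (k : Fin m → ℝ) :
    hat (∑ j, k j • crossProduct (Rhᵀ *ᵥ b j) (Rᵀ *ᵥ b j)) =
      Rᵀ * ((∑ j, k j • vecMulVec (b j) (b j)) * (Rh * Rᵀ)
        - (Rh * Rᵀ)ᵀ * (∑ j, k j • vecMulVec (b j) (b j))) * R := by
  rw [transpose_mul_commutator_mul_eq hR, hat_sum]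
  simp only [hat_smul, hat_crossProduct_mulVec_transpose, Matrix.mul_sum, Finset.sum_mul,
    Matrix.mul_smul, Matrix.smul_mul, ← Finset.sum_sub_distrib, smul_sub]

theorem hat_error_vector (m : ℕ) (R Rh : Matrix (Fin 3) (Fin 3) ℝ)
    (hR : Rᵀ * R = 1) (hRdet : R.det = 1) (hRh : Rhᵀ * Rh = 1) (hRhdet : Rh.det = 1)
    (b : Fin m → (Fin 3 → ℝ)) (hb : ∀ j, b j ⬝ᵥ b j = 1)
    (k : Fin m → ℝ) (hk : ∀ j, 0 < k j) :
    hat (∑ j, k j • crossProduct (Rhᵀ *ᵥ b j) (Rᵀ *ᵥ b j)) =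
      Rᵀ * ((∑ j, k j • vecMulVec (b j) (b j)) * (Rh * Rᵀ)
        - (Rh * Rᵀ)ᵀ * (∑ j, k j • vecMulVec (b j) (b j))) * R :=
  hat_error_vector_general m R Rh hR b k
end

section
/- Let p, p_1, ..., p_m ∈ R^3 with m ≥ 2, p ≠ p_j for all j, and suppose p is not collinear with at least one pair p_j, p_k (j ≠ k). Define b_j = (p_j − p)/||p_j − p|| and P_{b_j} = I − b_j b_j^T. Then p is the unique solution x of the linear system (Σ_j P_{b_j}) x = Σ_j P_{b_j} p_j, i.e., p = (Σ_j P_{b_j})^{-1} Σ_j P_{b_j} p_j. -/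
/-!
For a unit vector `b`, `P_b = 1 - b bᵀ` is the orthogonal projection onto `b⊥`, so
`v ⬝ P_b v = ‖P_b v‖²`. Since `P_{b_j}` kills `p_j - p`, the point `p` solves the system.
If `x` solves it too, then
`∑ⱼ ‖P_{b_j} (x - p)‖² = (x - p) ⬝ (∑ⱼ P_{b_j}) (x - p) = 0`, so `x - p` lies on every
line `ℝ ∙ (p_j - p)`; two of these lines meet only in `0`.
-/

open Matrix

noncomputable def bearing (p q : Fin 3 → ℝ) : Fin 3 → ℝ :=
  (Real.sqrt ((q - p) ⬝ᵥ (q - p)))⁻¹ • (q - p)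

section Projection

variable {R n : Type*} [Fintype n] [DecidableEq n]

theorem one_sub_vecMulVec_mulVec [CommRing R] (b v : n → R) :
    (1 - vecMulVec b b) *ᵥ v = v - (b ⬝ᵥ v) • b := by
  rw [sub_mulVec, one_mulVec, vecMulVec_mulVec, op_smul_eq_smul]

theorem mem_span_singleton_of_one_sub_vecMulVec_mulVec_eq_zero [CommRing R] {b v : n → R}
    (h : (1 - vecMulVec b b) *ᵥ v = 0) : v ∈ R ∙ b := by
  rw [one_sub_vecMulVec_mulVec, sub_eq_zero] at h
  exact h ▸ Submodule.smul_mem _ _ (Submodule.mem_span_singleton_self b)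

theorem one_sub_vecMulVec_mulVec_smul_self [CommRing R] {b : n → R} (hb : b ⬝ᵥ b = 1)
    (c : R) :
    (1 - vecMulVec b b) *ᵥ (c • b) = 0 := by
  rw [one_sub_vecMulVec_mulVec, dotProduct_smul, hb, smul_eq_mul, mul_one, sub_self]

theorem dotProduct_one_sub_vecMulVec_mulVec [CommRing R] {b : n → R} (hb : b ⬝ᵥ b = 1)
    (v : n → R) :
    v ⬝ᵥ ((1 - vecMulVec b b) *ᵥ v) =
      ((1 - vecMulVec b b) *ᵥ v) ⬝ᵥ ((1 - vecMulVec b b) *ᵥ v) := by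
  simp only [one_sub_vecMulVec_mulVec, dotProduct_sub, sub_dotProduct, dotProduct_smul,
    smul_dotProduct, smul_eq_mul, hb, dotProduct_comm v b]
  ring

theorem one_sub_vecMulVec_mulVec_eq_zero_of_sum [Field R] [LinearOrder R]
    [IsStrictOrderedRing R] {ι : Type*} [Fintype ι] {b : ι → n → R}
    (hb : ∀ i, b i ⬝ᵥ b i = 1) {v : n → R}
    (h : (∑ i, (1 - vecMulVec (b i) (b i))) *ᵥ v = 0) (i : ι) :
    (1 - vecMulVec (b i) (b i)) *ᵥ v = 0 := by
  set w : ι → n → R := fun i ↦ (1 - vecMulVec (b i) (b i)) *ᵥ v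
  have hsum : ∑ i, w i ⬝ᵥ w i = 0 := by
    simp only [w, ← dotProduct_one_sub_vecMulVec_mulVec (hb _), ← dotProduct_sum,
      ← sum_mulVec, h, dotProduct_zero]
  have hnonneg (j : ι) : 0 ≤ w j ⬝ᵥ w j := Fintype.sum_nonneg fun _ ↦ mul_self_nonneg _
  exact dotProduct_self_eq_zero.mp
    (congrFun ((Fintype.sum_eq_zero_iff_of_nonneg hnonneg).mp hsum) i)

end Projection

section Bearing

variable {p q : Fin 3 → ℝ}

theorem sqrt_dotProduct_self_sub_pos (h : p ≠ q) : 0 < Real.sqrt ((q - p) ⬝ᵥ (q - p)) := by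
  refine Real.sqrt_pos.mpr (lt_of_le_of_ne (Fintype.sum_nonneg fun _ ↦ mul_self_nonneg _) ?_)
  rw [ne_comm, Ne, dotProduct_self_eq_zero, sub_eq_zero]
  exact h.symm

theorem bearing_dotProduct_self (h : p ≠ q) : bearing p q ⬝ᵥ bearing p q = 1 := by
  have hpos := sqrt_dotProduct_self_sub_pos h
  have hsq := Real.mul_self_sqrt (Real.sqrt_pos.mp hpos).le
  rw [bearing, smul_dotProduct, dotProduct_smul, smul_eq_mul, smul_eq_mul]
  set s := Real.sqrt ((q - p) ⬝ᵥ (q - p))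
  rw [← hsq]
  field_simp

theorem sub_eq_smul_bearing (h : p ≠ q) :
    q - p = Real.sqrt ((q - p) ⬝ᵥ (q - p)) • bearing p q := by
  rw [bearing, smul_smul, mul_inv_cancel₀ (sqrt_dotProduct_self_sub_pos h).ne', one_smul]

theorem one_sub_vecMulVec_bearing_mulVec_eq (h : p ≠ q) :
    (1 - vecMulVec (bearing p q) (bearing p q)) *ᵥ p =
      (1 - vecMulVec (bearing p q) (bearing p q)) *ᵥ q := by
  rw [eq_comm, ← sub_eq_zero, ← mulVec_sub, sub_eq_smul_bearing h,
    one_sub_vecMulVec_mulVec_smul_self (bearing_dotProduct_self h)]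

theorem bearing_mem_span_singleton (p q : Fin 3 → ℝ) : bearing p q ∈ ℝ ∙ (q - p) :=
  Submodule.smul_mem _ _ (Submodule.mem_span_singleton_self _)

end Bearing

theorem unique_position_general (m : ℕ) (p : Fin 3 → ℝ) (q : Fin m → (Fin 3 → ℝ))
    (hne : ∀ j, p ≠ q j)
    (hind : ∃ j k : Fin m, LinearIndependent ℝ ![q j - p, q k - p]) :
    (∑ j, (1 - vecMulVec (bearing p (q j)) (bearing p (q j)))) *ᵥ p =
        ∑ j, (1 - vecMulVec (bearing p (q j)) (bearing p (q j))) *ᵥ (q j) ∧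
    ∀ x : Fin 3 → ℝ,
      (∑ j, (1 - vecMulVec (bearing p (q j)) (bearing p (q j)))) *ᵥ x =
          ∑ j, (1 - vecMulVec (bearing p (q j)) (bearing p (q j))) *ᵥ (q j) → x = p := by
  have hsolves : (∑ j, (1 - vecMulVec (bearing p (q j)) (bearing p (q j)))) *ᵥ p =
      ∑ j, (1 - vecMulVec (bearing p (q j)) (bearing p (q j))) *ᵥ (q j) := by
    rw [sum_mulVec]
    exact Finset.sum_congr rfl fun j _ ↦ one_sub_vecMulVec_bearing_mulVec_eq (hne j)
  refine ⟨hsolves, fun x hx ↦ sub_eq_zero.mp ?_⟩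
  have hker := one_sub_vecMulVec_mulVec_eq_zero_of_sum (fun j ↦ bearing_dotProduct_self (hne j))
    (by rw [mulVec_sub, hx, hsolves, sub_self] : _ *ᵥ (x - p) = 0)
  have hline j : x - p ∈ ℝ ∙ (q j - p) :=
    (Submodule.span_singleton_le_iff_mem _ _).mpr (bearing_mem_span_singleton p (q j))
      (mem_span_singleton_of_one_sub_vecMulVec_mulVec_eq_zero (hker j))
  obtain ⟨j, k, hjk⟩ := hind
  have hdisj := hjk.iSupIndep_span_singleton.pairwiseDisjoint (show (0 : Fin 2) ≠ 1 by decide)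
  exact Submodule.disjoint_def.mp hdisj _ (hline j) (hline k)

theorem unique_position (m : ℕ) (hm : 2 ≤ m) (p : Fin 3 → ℝ) (q : Fin m → (Fin 3 → ℝ))
    (hne : ∀ j, p ≠ q j)
    (hind : ∃ j k : Fin m, LinearIndependent ℝ ![q j - p, q k - p]) :
    (∑ j, (1 - vecMulVec (bearing p (q j)) (bearing p (q j)))) *ᵥ p =
        ∑ j, (1 - vecMulVec (bearing p (q j)) (bearing p (q j))) *ᵥ (q j) ∧
    ∀ x : Fin 3 → ℝ,
      (∑ j, (1 - vecMulVec (bearing p (q j)) (bearing p (q j)))) *ᵥ x =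
          ∑ j, (1 - vecMulVec (bearing p (q j)) (bearing p (q j))) *ᵥ (q j) → x = p :=
  unique_position_general m p q hne hind
end
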